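/- For all integers t and d with 1 ≤ d ≤ t, we have s(H_{t,d}) ≥ d². -/

import Mathlib

open SimpleGraph

/-- The subgraph of `F` consisting of the edges that receive color `b` under the
edge 2-coloring `c` (colors are `Bool`: `true` = red, `false` = blue). -/
def colorSubgraph {V : Type*} (F : SimpleGraph V) (c : Sym2 V → Bool) (b : Bool) :
    SimpleGraph V where
  Adj x y := F.Adj x y ∧ c s(x, y) = b
  symm := by
    constructor
    intro x y h
    exact ⟨h.1.symm, by rw [Sym2.eq_swap]; exact h.2⟩
  loopless := by
    constructor
    intro x h
    exact F.loopless.irrefl x h.1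

/-- `G` contains a copy of `H`, i.e. a subgraph isomorphic to `H`. -/
def ContainsCopy {V W : Type*} (G : SimpleGraph V) (H : SimpleGraph W) : Prop :=
  ∃ f : W → V, Function.Injective f ∧ ∀ ⦃a b⦄, H.Adj a b → G.Adj (f a) (f b)

/-- The 2-coloring `c` of (the edges of) `F` contains a monochromatic copy of `H`. -/
def HasMonoCopy {V W : Type*} (F : SimpleGraph V) (H : SimpleGraph W)
    (c : Sym2 V → Bool) : Prop :=
  ∃ b : Bool, ContainsCopy (colorSubgraph F c b) H

/-- `F → H`: every 2-coloring of the edges of `F` contains a monochromatic copy of `H`. -/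
def IsRamseyFor {V W : Type*} (F : SimpleGraph V) (H : SimpleGraph W) : Prop :=
  ∀ c : Sym2 V → Bool, HasMonoCopy F H c

/-- `F` is Ramsey `H`-minimal: `F → H` but no proper subgraph of `F` is Ramsey for `H`. -/
def IsRamseyMinimalFor {V W : Type*} (F : SimpleGraph V) (H : SimpleGraph W) : Prop :=
  IsRamseyFor F H ∧ ∀ F' : F.Subgraph, F' ≠ ⊤ → ¬ IsRamseyFor F'.coe H

/-- The degree of the vertex `v` in `G`. -/
noncomputable def degOf {V : Type*} (G : SimpleGraph V) (v : V) : ℕ :=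
  (G.neighborSet v).ncard

/-- The minimum degree `δ(G)`. -/
noncomputable def minDeg {V : Type*} (G : SimpleGraph V) : ℕ :=
  sInf {k | ∃ v, degOf G v = k}

/-- `s(H)`: the minimum of `δ(F)` over all Ramsey `H`-minimal graphs `F`. -/
noncomputable def sVal {W : Type*} (H : SimpleGraph W) : ℕ :=
  sInf {k | ∃ (n : ℕ) (F : SimpleGraph (Fin n)), IsRamseyMinimalFor F H ∧ minDeg F = k}

/-- The graph `H_{t,d}` on `t+1` vertices: a complete graph on the vertices
`0, …, t-1` together with the additional vertex `t` adjacent to exactly the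
`d` vertices `0, …, d-1` of the complete graph. -/
def Htd (t d : ℕ) : SimpleGraph (Fin (t + 1)) where
  Adj x y := x ≠ y ∧ (((x : ℕ) < t ∧ (y : ℕ) < t) ∨ ((x : ℕ) = t ∧ (y : ℕ) < d) ∨
    ((y : ℕ) = t ∧ (x : ℕ) < d))
  symm := by
    constructor
    intro x y h
    exact ⟨h.1.symm, by tauto⟩
  loopless := by
    constructor
    intro x h
    exact h.1 rfl

/-!
Let `v` be a vertex of a Ramsey `H`-minimal graph `F`, where every vertex of `H` lies in a
`(d+1)`-clique (as in `H_{t,d}` when `d ≤ t`). By minimality `F - v` has a 2-colouring `c'` without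
monochromatic `H`. If `v` had fewer than `d²` neighbours, they could be split into a part `A`
without red `K_d` and a part `B` without blue `K_d`: peel disjoint red `K_d`s off the neighbourhood
into `B`; fewer than `d` of them fit, so `B` has no blue `K_d` by pigeonhole, and what is left has
no red `K_d`. Colouring `vu` red for `u ∈ A` and blue for `u ∈ B` extends `c'` to `F`; a
monochromatic copy of `H` must pass through `v`, and the other `d` vertices of a `(d+1)`-clique
through `v` then form a `K_d` of that colour inside `A` or `B`, a contradiction.

The infimum defining `s(H)` is over a nonempty set (finite Ramsey numbers yield a Ramsey graph, and
hence a minimal one), so it is not the junk value `sInf ∅ = 0`.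
-/

open Finset

variable {V W α : Type*}

namespace SimpleGraph

theorem exists_isNClique_or_compl_isNClique [DecidableEq α] (G : SimpleGraph α)
    [DecidableRel G.Adj] : ∀ (a b : ℕ) (s : Finset α), (a + b).choose a ≤ #s →
      ∃ t ⊆ s, G.IsNClique a t ∨ Gᶜ.IsNClique b t
  | 0, _, _, _ => ⟨∅, empty_subset _, Or.inl (by simp)⟩
  | _, 0, _, _ => ⟨∅, empty_subset _, Or.inr (by simp)⟩
  | a + 1, b + 1, s, hs => by
    obtain ⟨v, hv⟩ : s.Nonempty := card_pos.1 <| (Nat.choose_pos (by omega)).trans_le hs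
    set N := (s.erase v).filter (G.Adj v)
    set M := (s.erase v).filter (¬G.Adj v ·)
    have hNM : #N + #M + 1 = #s := by
      rw [card_filter_add_card_filter_not, card_erase_add_one hv]
    have hpascal : (a + 1 + (b + 1)).choose (a + 1) =
        (a + (b + 1)).choose a + (a + 1 + b).choose (a + 1) := by
      rw [show a + 1 + (b + 1) = a + b + 1 + 1 by omega, Nat.choose_succ_succ',
        show a + (b + 1) = a + b + 1 by omega, show a + 1 + b = a + b + 1 by omega]
    have hNs : N ⊆ s := (filter_subset _ _).trans (erase_subset _ _)
    have hMs : M ⊆ s := (filter_subset _ _).trans (erase_subset _ _)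
    by_cases hN : (a + (b + 1)).choose a ≤ #N
    · obtain ⟨t, hts, ht | ht⟩ := exists_isNClique_or_compl_isNClique G a (b + 1) N hN
      · refine ⟨insert v t, insert_subset hv (hts.trans hNs), Or.inl (ht.insert fun w hw => ?_)⟩
        exact (mem_filter.1 (hts hw)).2
      · exact ⟨t, hts.trans hNs, Or.inr ht⟩
    · obtain ⟨t, hts, ht | ht⟩ :=
        exists_isNClique_or_compl_isNClique G (a + 1) b M (by omega)
      · exact ⟨t, hts.trans hMs, Or.inl ht⟩
      · refine ⟨insert v t, insert_subset hv (hts.trans hMs), Or.inr (ht.insert fun w hw => ?_)⟩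
        obtain ⟨hw, hvw⟩ := mem_filter.1 (hts hw)
        exact (compl_adj _ _ _).2 ⟨(ne_of_mem_erase hw).symm, hvw⟩
termination_by a b => a + b

end SimpleGraph

open SimpleGraph

theorem compl_colorSubgraph_top (c : Sym2 V → Bool) :
    (colorSubgraph ⊤ c true)ᶜ = colorSubgraph ⊤ c false := by
  ext x y
  simp only [compl_adj, colorSubgraph, top_adj]
  cases c s(x, y) <;> simp

theorem containsCopy_of_isNClique [Finite W] {G : SimpleGraph V} (H : SimpleGraph W)
    {s : Finset V} (hs : G.IsNClique (Nat.card W) s) : ContainsCopy G H := by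
  obtain ⟨e⟩ : Nonempty (W ≃ s) := Finite.card_eq.1 (by simpa using hs.card_eq.symm)
  refine ⟨fun w => e w, Subtype.val_injective.comp e.injective, fun a b hab => ?_⟩
  exact hs.isClique (e a).2 (e b).2 (by simpa using hab.ne)

theorem exists_isRamseyFor_top [Finite W] (H : SimpleGraph W) :
    ∃ N, IsRamseyFor (⊤ : SimpleGraph (Fin N)) H := by
  classical
  refine ⟨(Nat.card W + Nat.card W).choose (Nat.card W), fun c => ?_⟩
  obtain ⟨s, -, hs | hs⟩ := exists_isNClique_or_compl_isNClique (colorSubgraph ⊤ c true)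
    (Nat.card W) (Nat.card W) univ (by simp)
  · exact ⟨true, containsCopy_of_isNClique H hs⟩
  · rw [compl_colorSubgraph_top] at hs
    exact ⟨false, containsCopy_of_isNClique H hs⟩

theorem SimpleGraph.Iso.ncard_edgeSet_eq {G : SimpleGraph V} {G' : SimpleGraph W} (e : G ≃g G') :
    G.edgeSet.ncard = G'.edgeSet.ncard :=
  Nat.card_congr e.mapEdgeSet

namespace SimpleGraph.Subgraph

variable {F : SimpleGraph V}

theorem ncard_edgeSet_coe (F' : F.Subgraph) : F'.coe.edgeSet.ncard = F'.edgeSet.ncard := by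
  rw [← F'.image_coe_edgeSet_coe,
    Set.ncard_image_of_injective _ (Sym2.map.injective Subtype.val_injective)]

theorem card_verts_add_ncard_edgeSet_coe_lt [Finite V] {F' : F.Subgraph} (hF' : F' ≠ ⊤) :
    Nat.card F'.verts + F'.coe.edgeSet.ncard < Nat.card V + F.edgeSet.ncard := by
  rw [ncard_edgeSet_coe, Nat.card_coe_set_eq, ← Set.ncard_univ]
  have hE : F'.edgeSet.ncard ≤ F.edgeSet.ncard := Set.ncard_le_ncard F'.edgeSet_subset
  by_cases hV : F'.verts = Set.univ
  · have hE' : F'.edgeSet ≠ F.edgeSet := fun h => hF' <| Subgraph.ext hV <| by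
      ext x y
      rw [Subgraph.top_adj, ← Subgraph.mem_edgeSet, h, SimpleGraph.mem_edgeSet]
    rw [hV]
    have := Set.ncard_lt_ncard (F'.edgeSet_subset.ssubset_of_ne hE')
    omega
  · have := Set.ncard_lt_ncard (Set.ssubset_univ_iff.2 hV)
    omega

end SimpleGraph.Subgraph

variable {F : SimpleGraph V} {H : SimpleGraph W}

theorem IsRamseyFor.of_copy {G : SimpleGraph α} (f : Copy F G) (hF : IsRamseyFor F H) :
    IsRamseyFor G H := by
  intro c
  obtain ⟨b, g, hg, hadj⟩ := hF (c ∘ Sym2.map f)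
  refine ⟨b, f ∘ g, f.injective.comp hg, fun x y hxy => ?_⟩
  obtain ⟨hF, hc⟩ := hadj hxy
  exact ⟨f.toHom.map_adj hF, hc⟩

theorem IsRamseyFor.exists_isRamseyMinimalFor {n : ℕ} {F : SimpleGraph (Fin n)}
    (hF : IsRamseyFor F H) : ∃ m, ∃ G : SimpleGraph (Fin m), IsRamseyMinimalFor G H := by
  induction hk : n + F.edgeSet.ncard using Nat.strong_induction_on generalizing n F with
  | _ k ih =>
  by_cases hmin : IsRamseyMinimalFor F H
  · exact ⟨n, F, hmin⟩
  obtain ⟨F', hne, hF'⟩ : ∃ F' : F.Subgraph, F' ≠ ⊤ ∧ IsRamseyFor F'.coe H := by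
    simpa [IsRamseyMinimalFor, hF] using hmin
  classical
  let e := F'.coe.overFinIso rfl
  refine ih _ ?_ (hF'.of_copy e.toCopy) rfl
  have := F'.card_verts_add_ncard_edgeSet_coe_lt hne
  rw [Nat.card_eq_fintype_card, Nat.card_eq_fintype_card, Fintype.card_fin] at this
  rw [← e.ncard_edgeSet_eq]
  omega

namespace SimpleGraph

theorem CliqueFreeOn.union_of_isIndepSet {G : SimpleGraph α} {s t : Set α} {n : ℕ}
    (hs : G.CliqueFreeOn s n) (ht : G.IsIndepSet t) : G.CliqueFreeOn (s ∪ t) (n + 1) := by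
  classical
  intro u hu hun
  have hut : #(u.filter (· ∈ t)) ≤ 1 := card_le_one.2 fun x hx y hy => by
    by_contra hxy
    simp only [mem_filter] at hx hy
    exact ht hx.2 hy.2 hxy (hun.isClique hx.1 hy.1 hxy)
  obtain ⟨u', hu', hcard⟩ : ∃ u' ⊆ u.filter (· ∉ t), #u' = n := exists_subset_card_eq (by
    have := card_filter_add_card_filter_not (s := u) (· ∈ t)
    have := hun.card_eq
    omega)
  refine hs (fun x hx => ?_) ⟨hun.isClique.subset (hu'.trans (filter_subset _ _)), hcard⟩
  obtain ⟨hxu, hxt⟩ := mem_filter.1 (hu' hx)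
  exact (hu hxu).resolve_right hxt

theorem exists_cliqueFreeOn_sdiff_compl_cliqueFreeOn [DecidableEq α] (G : SimpleGraph α)
    (d : ℕ) : ∀ (k : ℕ) (S : Finset α), #S < (k + 1) * d →
      ∃ U ⊆ S, G.CliqueFreeOn ↑(S \ U) d ∧ Gᶜ.CliqueFreeOn ↑U (k + 1)
  | 0, S, hS =>
    ⟨∅, empty_subset _, by simpa using cliqueFreeOn_of_card_lt (G := G) (by simpa using hS), by simp⟩
  | k + 1, S, hS => by
    by_cases hS' : G.CliqueFreeOn S d
    · exact ⟨∅, empty_subset _, by simpa using hS', by simp⟩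
    obtain ⟨K, hKS, hK⟩ : ∃ K : Finset α, K ⊆ S ∧ G.IsNClique d K := by
      simpa [CliqueFreeOn] using hS'
    obtain ⟨U, hUS, hred, hblue⟩ := exists_cliqueFreeOn_sdiff_compl_cliqueFreeOn G d k (S \ K) (by
      have := hK.card_eq ▸ card_le_card hKS
      rw [card_sdiff_of_subset hKS, hK.card_eq]
      rw [add_one_mul (k + 1)] at hS
      omega)
    refine ⟨U ∪ K, union_subset (hUS.trans sdiff_subset) hKS, ?_, ?_⟩
    · rwa [sdiff_sdiff_left, sup_eq_union, union_comm] at hred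
    · push_cast
      exact hblue.union_of_isIndepSet ((G.isIndepSet_compl).2 hK.isClique)

end SimpleGraph

theorem exists_colorSubgraph_cliqueFreeOn (F : SimpleGraph V) (c : Sym2 V → Bool) {d : ℕ}
    {S : Finset V} (hS : #S < d * d) :
    ∃ P : V → Bool, ∀ b, (colorSubgraph F c b).CliqueFreeOn {x | x ∈ S ∧ P x = b} d := by
  classical
  obtain _ | k := d
  · simp at hS
  obtain ⟨U, -, hred, hblue⟩ :=
    exists_cliqueFreeOn_sdiff_compl_cliqueFreeOn (colorSubgraph F c true) (k + 1) k S hS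
  refine ⟨fun x => x ∉ U, fun b => ?_⟩
  cases b
  · refine CliqueFreeOn.anti _ _ (fun x y h => ?_) <|
      CliqueFreeOn.subset _ (fun x hx => by simpa using hx.2) hblue
    exact (compl_adj _ _ _).2 ⟨h.1.ne, fun h' => by simp_all [colorSubgraph]⟩
  · exact CliqueFreeOn.subset _ (fun x hx => by simpa using hx) hred

theorem containsCopy_colorSubgraph_deleteVerts {c : Sym2 V → Bool} {b : Bool} {v : V}
    {f : W → V} (hf : Function.Injective f)
    (hadj : ∀ ⦃x y⦄, H.Adj x y → (colorSubgraph F c b).Adj (f x) (f y)) (hv : ∀ w, f w ≠ v) :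
    ContainsCopy (colorSubgraph ((⊤ : F.Subgraph).deleteVerts {v}).coe (c ∘ Sym2.map (↑)) b) H := by
  refine ⟨fun w => ⟨f w, by simpa using hv w⟩, fun x y h => hf (congrArg Subtype.val h),
    fun x y hxy => ?_⟩
  obtain ⟨hFxy, hcxy⟩ := hadj hxy
  exact ⟨by simpa using ⟨hv x, hv y, hFxy⟩, hcxy⟩

theorem IsRamseyMinimalFor.mul_self_le_degOf {d : ℕ}
    (hH : ∀ w, ∃ s : Finset W, w ∈ s ∧ H.IsNClique (d + 1) s)
    (hF : IsRamseyMinimalFor F H) (v : V) (hv : (F.neighborSet v).Finite) :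
    d * d ≤ degOf F v := by
  classical
  by_contra! hdeg
  set F' : F.Subgraph := (⊤ : F.Subgraph).deleteVerts {v}
  have hF'v : ∀ x, x ∈ F'.verts ↔ x ≠ v := by simp [F']
  obtain ⟨c', hc'⟩ : ∃ c', ¬HasMonoCopy F'.coe H c' := by
    simpa [IsRamseyFor] using hF.2 F' fun h => (hF'v v).1 (by rw [h]; trivial) rfl
  let cBase : Sym2 V → Bool := Function.extend (Sym2.map (↑)) c' fun _ => true
  have hcBase : ∀ e, cBase (Sym2.map (↑) e) = c' e :=
    (Sym2.map.injective Subtype.val_injective).extend_apply _ _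
  obtain ⟨P, hP⟩ := exists_colorSubgraph_cliqueFreeOn F cBase (S := hv.toFinset)
    (by rwa [← Set.ncard_eq_toFinset_card _ hv])
  let c : Sym2 V → Bool := Sym2.lift ⟨fun x y =>
    if x = v then P y else if y = v then P x else cBase s(x, y),
    fun x y => by dsimp only; split_ifs <;> simp_all [Sym2.eq_swap]⟩
  have hc_v : ∀ u, c s(v, u) = P u := by simp [c]
  have hc_off : ∀ x y, x ≠ v → y ≠ v → c s(x, y) = cBase s(x, y) := by simp +contextual [c]
  obtain ⟨b, f, hf, hadj⟩ := hF.1 c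
  by_cases hvf : ∃ w, f w = v
  · obtain ⟨w, rfl⟩ := hvf
    obtain ⟨s, hws, hs⟩ := hH w
    have hadj_s : ∀ x ∈ s, ∀ y ∈ s, x ≠ y → (colorSubgraph F c b).Adj (f x) (f y) :=
      fun x hx y hy hxy => hadj (hs.isClique hx hy hxy)
    have hnbr : ∀ x ∈ s.erase w, F.Adj (f w) (f x) ∧ P (f x) = b := fun x hx => by
      simpa [colorSubgraph, hc_v] using
        hadj_s w hws x (mem_of_mem_erase hx) (ne_of_mem_erase hx).symm
    refine hP b (t := (s.erase w).map ⟨f, hf⟩) ?_ ⟨?_, ?_⟩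
    · simp only [coe_map, Set.image_subset_iff]
      exact fun x hx => ⟨hv.mem_toFinset.2 (hnbr x hx).1, (hnbr x hx).2⟩
    · simp only [coe_map, Function.Embedding.coeFn_mk]
      rintro _ ⟨x, hx, rfl⟩ _ ⟨y, hy, rfl⟩ hxy
      obtain ⟨hFxy, hcxy⟩ :=
        hadj_s x (mem_of_mem_erase hx) y (mem_of_mem_erase hy) (ne_of_apply_ne f hxy)
      exact ⟨hFxy, hc_off _ _ (hnbr x hx).1.ne.symm (hnbr y hy).1.ne.symm ▸ hcxy⟩
    · rw [card_map, card_erase_of_mem hws, hs.card_eq, Nat.add_sub_cancel]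
  · have hrestrict : c ∘ Sym2.map (↑) = c' := funext <| Sym2.ind fun x y => by
      rw [Function.comp_apply, Sym2.map_mk, hc_off _ _ ((hF'v _).1 x.2) ((hF'v _).1 y.2),
        ← Sym2.map_mk, hcBase]
    push Not at hvf
    exact hc' ⟨b, hrestrict ▸ containsCopy_colorSubgraph_deleteVerts hf hadj hvf⟩

theorem IsRamseyFor.nonempty [Nonempty W] (hF : IsRamseyFor F H) : Nonempty V :=
  have ⟨_, f, _⟩ := hF fun _ => true
  ⟨f (Classical.arbitrary W)⟩

theorem le_minDeg [Nonempty V] {k : ℕ} (h : ∀ v, k ≤ degOf F v) : k ≤ minDeg F :=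
  le_csInf (Set.range_nonempty _) (Set.forall_mem_range.2 h)

theorem le_sVal {k : ℕ} (hex : ∃ n, ∃ F : SimpleGraph (Fin n), IsRamseyMinimalFor F H)
    (h : ∀ n (F : SimpleGraph (Fin n)), IsRamseyMinimalFor F H → k ≤ minDeg F) : k ≤ sVal H := by
  obtain ⟨n, F, hF⟩ := hex
  exact le_csInf ⟨_, n, F, hF, rfl⟩ fun _ ⟨n, F, hF, hk⟩ => hk ▸ h n F hF

theorem Htd.exists_isNClique {t d : ℕ} (hdt : d ≤ t) (x : Fin (t + 1)) :
    ∃ s, x ∈ s ∧ (Htd t d).IsNClique (d + 1) s := by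
  set y : Fin (t + 1) := if (x : ℕ) < d then Fin.last t else x
  have hy : d ≤ y := by
    simp only [y]
    split_ifs with hx
    · simpa using hdt
    · omega
  refine ⟨insert y (Iio ⟨d, by omega⟩), ?_, IsNClique.insert ⟨?_, by simp⟩ fun a ha => ?_⟩
  · simp only [y]
    split_ifs with hx
    · simp [Fin.lt_def, hx]
    · simp
  · intro a ha b hb hab
    simp [Fin.lt_def] at ha hb
    exact ⟨hab, Or.inl ⟨by omega, by omega⟩⟩
  · simp [Fin.lt_def] at ha
    refine ⟨fun h => by simp [h] at hy; omega, ?_⟩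
    have := y.isLt
    omega

theorem stmt_3_general (t d : ℕ) (h2 : d ≤ t) :
    d ^ 2 ≤ sVal (Htd t d) := by
  obtain ⟨N, hN⟩ := exists_isRamseyFor_top (Htd t d)
  refine le_sVal hN.exists_isRamseyMinimalFor fun n F hF => ?_
  have := hF.1.nonempty
  refine le_minDeg fun v => ?_
  rw [sq]
  exact hF.mul_self_le_degOf (Htd.exists_isNClique h2) v (Set.toFinite _)

/-- For all integers `t`, `d` with `1 ≤ d ≤ t`, we have `s(H_{t,d}) ≥ d²`. -/
theorem stmt_3 (t d : ℕ) (h1 : 1 ≤ d) (h2 : d ≤ t) :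
    d ^ 2 ≤ sVal (Htd t d) :=
  stmt_3_general t d h2
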